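/- arXiv:1203.5424 — 7 statements merged into one kernel-verified Lean document; each statement's English description precedes it below -/
import Mathlib

section
/- For every integer n > 1, the sum over i+j=n with i ≥ 1 of binomial(2i-1,i)*binomial(2j-1,j) equals 4^(n-1). -/
/-!
Write `C k` for the central binomial coefficient. Since `Ring.choose (-1/2) k = (-1/4)^k * C k`,
Vandermonde's identity for `Ring.choose (-1/2 + -1/2) n = (-1)^n` gives `∑_{i+j=n} C i * C j = 4^n`.
For `i ≥ 1` we have `2 * (2i-1).choose i = C i`, so four times the sum is this convolution: the
interior terms match exactly, and the term `i = n` (where `(0-1).choose 0 = 1`) accounts for the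
two boundary terms `C n` of the convolution.
-/

open Finset Nat Polynomial

namespace Ring

theorem choose_succ_right_eq_div {K : Type*} [Field K] [CharZero K] (a : K) (k : ℕ) :
    choose a (k + 1) = choose a k * (a - k) / (k + 1) := by
  rw [choose_eq_smul, choose_eq_smul, descPochhammer_succ_right, smeval_mul, smeval_sub,
    smeval_X, smeval_natCast, smul_eq_mul, smul_eq_mul, factorial_succ]
  push_cast
  field_simp
  simp

theorem choose_neg_one {R : Type*} [Ring R] [BinomialRing R] (k : ℕ) :
    choose (-1 : R) k = (-1) ^ k := by
  rw [choose_neg, add_sub_cancel_left, choose_natCast, Nat.choose_self, Nat.cast_one,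
    Units.smul_def, zsmul_one, Int.cast_negOnePow_natCast]

theorem choose_neg_inv_two {K : Type*} [Field K] [CharZero K] (k : ℕ) :
    choose (-2⁻¹ : K) k = (-4⁻¹) ^ k * centralBinom k := by
  induction k with
  | zero => simp
  | succ k ih =>
    have h := succ_mul_centralBinom_succ k
    have hC : ((k + 1).centralBinom : K) = 2 * (2 * k + 1) * k.centralBinom / (k + 1) := by
      rw [eq_div_iff (Nat.cast_add_one_ne_zero k)]
      exact_mod_cast (mul_comm _ _).trans h
    rw [choose_succ_right_eq_div, ih, hC]
    field_simp
    ring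

end Ring

namespace Nat

theorem sum_centralBinom_mul_centralBinom (n : ℕ) :
    ∑ ij ∈ antidiagonal n, centralBinom ij.1 * centralBinom ij.2 = 4 ^ n := by
  have h := Ring.add_choose_eq (r := (-2⁻¹ : ℚ)) (s := -2⁻¹) n (Commute.all _ _)
  rw [show (-2⁻¹ : ℚ) + -2⁻¹ = -1 by norm_num, Ring.choose_neg_one] at h
  have hterm : ∀ ij ∈ antidiagonal n, Ring.choose (-2⁻¹ : ℚ) ij.1 * Ring.choose (-2⁻¹) ij.2
      = (-4⁻¹) ^ n * (centralBinom ij.1 * centralBinom ij.2 : ℕ) := by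
    intro ij hij
    rw [Ring.choose_neg_inv_two, Ring.choose_neg_inv_two, ← mem_antidiagonal.mp hij, pow_add]
    push_cast
    ring
  rw [sum_congr rfl hterm, ← mul_sum, ← Nat.cast_sum] at h
  have h4 : ((∑ ij ∈ antidiagonal n, centralBinom ij.1 * centralBinom ij.2 : ℕ) : ℚ) = 4 ^ n := by
    rw [← mul_right_inj' (pow_ne_zero n (by norm_num : (-4⁻¹ : ℚ) ≠ 0)), ← h, ← mul_pow]
    norm_num
  exact_mod_cast h4

theorem two_mul_choose_two_mul_sub_one {i : ℕ} (hi : 0 < i) :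
    2 * (2 * i - 1).choose i = centralBinom i := by
  obtain ⟨k, rfl⟩ := exists_eq_add_one_of_ne_zero hi.ne'
  rw [show 2 * (k + 1) - 1 = 2 * k + 1 by omega, centralBinom_eq_two_mul_choose,
    show 2 * (k + 1) = 2 * k + 1 + 1 by ring, choose_succ_succ' (2 * k + 1) k,
    choose_symm_half, two_mul]

end Nat

theorem sum_shifted_binom_eq_four_pow (n : ℕ) (hn : 1 < n) :
    ∑ i ∈ Finset.Icc 1 n, Nat.choose (2 * i - 1) i * Nat.choose (2 * (n - i) - 1) (n - i)
      = 4 ^ (n - 1) := by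
  have hinterior : ∀ i ∈ Ico 1 n, 4 * ((2 * i - 1).choose i * (2 * (n - i) - 1).choose (n - i))
      = centralBinom i * centralBinom (n - i) := fun i hi => by
    rw [mem_Ico] at hi
    rw [← two_mul_choose_two_mul_sub_one (by omega : 0 < i),
      ← two_mul_choose_two_mul_sub_one (by omega : 0 < n - i)]
    ring
  have hconv := sum_centralBinom_mul_centralBinom n
  rw [Nat.sum_antidiagonal_eq_sum_range_succ_mk, sum_range_succ, sum_range_eq_add_Ico _ (by omega),
    ← sum_congr rfl hinterior, ← mul_sum, ← mul_pow_sub_one (by omega : n ≠ 0)] at hconv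
  rw [← sum_Ico_add_eq_sum_Icc (by omega : 1 ≤ n)]
  simp only [Nat.sub_self, Nat.sub_zero, Nat.zero_sub, mul_zero, centralBinom_zero,
    choose_zero_right, mul_one, one_mul] at hconv ⊢
  have hlast := two_mul_choose_two_mul_sub_one (by omega : 0 < n)
  omega
end

section
/- For every nonnegative integer n and real numbers a and ℓ, the sum over i+j=n of binomial(2i+a,i)*binomial(2j,j) equals the sum over i+j=n of binomial(2i+a-ℓ,i)*binomial(2j+ℓ,j). -/
/-!
Write `S n x y = ∑_{i+j=n} C(x+2i, i) C(y+2j, j)`. Pascal's rule gives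
`S (n+1) (x+1) y = S n (x+2) y + S (n+1) x y`, and the same in the second argument by symmetry,
so induction on `n` shows `S n (x+1) y = S n x (y+1)`. Hence `t ↦ S n (a-t) t` is a polynomial
in `t` of period `1`, so it is constant.
-/

open Finset Polynomial

/-- Generalized binomial coefficient with real upper argument. -/
noncomputable def rchoose (x : ℝ) (k : ℕ) : ℝ :=
  (∏ j ∈ Finset.range k, (x - j)) / (Nat.factorial k : ℝ)

lemma rchoose_eq_choose (x : ℝ) (k : ℕ) : rchoose x k = Ring.choose x k := by
  rw [rchoose, Ring.choose_eq_smul, smul_eq_mul, ← aeval_eq_smeval, aeval_def, eval₂_eq_eval_map,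
    descPochhammer_map, descPochhammer_eval_eq_prod_range, div_eq_inv_mul]

theorem Polynomial.eval_eq_eval_zero_of_eval_add_one {R : Type*} [CommRing R] [IsDomain R]
    [CharZero R] {p : R[X]} (h : ∀ t, p.eval (t + 1) = p.eval t) (t : R) :
    p.eval t = p.eval 0 := by
  have hnat (m : ℕ) : p.eval (m : R) = p.eval 0 := by
    induction m with
    | zero => simp
    | succ m ih => rw [Nat.cast_succ, h, ih]
  have hconst : p = C (p.eval 0) := by
    refine eq_of_infinite_eval_eq _ _
      ((Set.infinite_range_of_injective Nat.cast_injective).mono ?_)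
    rintro _ ⟨m, rfl⟩
    simp [hnat]
  rw [hconst, eval_C, eval_C]

section CentralChoose

variable {R : Type*} [CommRing R] [BinomialRing R]

def centralChoose (x : R) (k : ℕ) : R := Ring.choose (x + 2 * k) k

@[simp]
lemma centralChoose_zero_right (x : R) : centralChoose x 0 = 1 := by
  simp [centralChoose]

lemma centralChoose_add_one_succ (x : R) (k : ℕ) :
    centralChoose (x + 1) (k + 1) = centralChoose (x + 2) k + centralChoose x (k + 1) := by
  have h : x + 1 + 2 * ((k + 1 : ℕ) : R) = x + 2 * k + 2 + 1 := by push_cast; ring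
  rw [centralChoose, centralChoose, centralChoose, h, Ring.choose_succ_succ, add_right_comm x]
  push_cast
  ring_nf

def centralChooseConv (n : ℕ) (x y : R) : R :=
  ∑ p ∈ antidiagonal n, centralChoose x p.1 * centralChoose y p.2

lemma centralChooseConv_comm (n : ℕ) (x y : R) :
    centralChooseConv n x y = centralChooseConv n y x := by
  rw [centralChooseConv, ← Nat.sum_antidiagonal_swap]
  simp only [centralChooseConv, Prod.fst_swap, Prod.snd_swap, mul_comm]

lemma centralChooseConv_succ_add_one (n : ℕ) (x y : R) :
    centralChooseConv (n + 1) (x + 1) y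
      = centralChooseConv n (x + 2) y + centralChooseConv (n + 1) x y := by
  simp only [centralChooseConv, Nat.sum_antidiagonal_succ, centralChoose_add_one_succ, add_mul,
    sum_add_distrib, centralChoose_zero_right]
  ring

lemma centralChooseConv_add_one_left (n : ℕ) (x y : R) :
    centralChooseConv n (x + 1) y = centralChooseConv n x (y + 1) := by
  induction n generalizing x y with
  | zero => simp [centralChooseConv]
  | succ n ih =>
    have h : centralChooseConv n (x + 2) y = centralChooseConv n x (y + 2) := by
      rw [← one_add_one_eq_two, ← add_assoc, ih, ih, add_assoc]
    rw [centralChooseConv_succ_add_one, centralChooseConv_comm (n + 1) x (y + 1),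
      centralChooseConv_succ_add_one, h, centralChooseConv_comm n (y + 2),
      centralChooseConv_comm (n + 1) y]

lemma map_centralChooseConv {S F : Type*} [CommRing S] [BinomialRing S] [FunLike F R S]
    [RingHomClass F R S] (f : F) (n : ℕ) (x y : R) :
    f (centralChooseConv n x y) = centralChooseConv n (f x) (f y) := by
  simp [centralChooseConv, centralChoose, Ring.map_choose, map_ofNat]

lemma centralChooseConv_eq_sum_range (n : ℕ) (x y : R) :
    centralChooseConv n x y = ∑ i ∈ range (n + 1),
      Ring.choose (2 * (i : R) + x) i * Ring.choose (2 * ((n - i : ℕ) : R) + y) (n - i) := by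
  simp only [centralChooseConv, centralChoose, add_comm x, add_comm y]
  exact Nat.sum_antidiagonal_eq_sum_range_succ
    (fun i j ↦ Ring.choose (2 * (i : R) + x) i * Ring.choose (2 * (j : R) + y) j) n

end CentralChoose

lemma centralChooseConv_sub_add {K : Type*} [Field K] [CharZero K] (n : ℕ) (a t : K) :
    centralChooseConv n (a - t) t = centralChooseConv n a 0 := by
  let p : K[X] := centralChooseConv n (C a - X) X
  have hp (s : K) : p.eval s = centralChooseConv n (a - s) s := by
    rw [← coe_evalRingHom, map_centralChooseConv]
    simp
  have hperiodic (s : K) : p.eval (s + 1) = p.eval s := by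
    rw [hp, hp, ← centralChooseConv_add_one_left]
    congr 1
    ring
  simpa [hp] using p.eval_eq_eval_zero_of_eval_add_one hperiodic t

theorem sum_gen_binom_shift_invariant (n : ℕ) (a ℓ : ℝ) :
    ∑ i ∈ Finset.range (n + 1),
        rchoose (2 * (i : ℝ) + a) i * (Nat.choose (2 * (n - i)) (n - i) : ℝ)
      = ∑ i ∈ Finset.range (n + 1),
        rchoose (2 * (i : ℝ) + a - ℓ) i * rchoose (2 * ((n - i : ℕ) : ℝ) + ℓ) (n - i) := by
  have hL := centralChooseConv_eq_sum_range n a 0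
  have hR := centralChooseConv_eq_sum_range n (a - ℓ) ℓ
  simp only [add_zero, ← add_sub_assoc] at hL hR
  simp only [rchoose_eq_choose, ← Ring.choose_natCast, Nat.cast_mul, Nat.cast_ofNat]
  rw [← hL, ← hR, centralChooseConv_sub_add]
end

section
/- For all positive integers t and nonnegative integers n, S_{t+2}(n+1) = S_t(n+1) + 4*S_{t+2}(n), where S_t(n) is the sum over all t-tuples (i_1,...,i_t) of nonnegative integers with i_1+...+i_t = n of the product binomial(2i_1,i_1)*...*binomial(2i_t,i_t). -/
/-!
Let `C(X) = ∑ binom(2n, n) Xⁿ`, so that `S_t(n)` is the coefficient of `Xⁿ` in `C^t`.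
Since `binom(2k, k) = (-4)^k binom(-1/2, k)`, the Chu–Vandermonde identity for the exponents
`-1/2 + -1/2 = -1` gives `∑_{i+j=n} binom(2i, i) binom(2j, j) = 4ⁿ`, i.e. `C² = 1/(1 - 4X)`,
or `C² = 1 + 4X C²`. Multiplying by `C^t` and comparing coefficients of `X^{n+1}` gives the
recurrence.
-/

/-- `S t n` is the sum over `t`-tuples of nonnegative integers summing to `n`
of products of central binomial coefficients. -/
def S (t n : ℕ) : ℕ :=
  ∑ f ∈ Finset.Nat.antidiagonalTuple t n, ∏ m : Fin t, Nat.centralBinom (f m)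

open Finset PowerSeries

theorem Ring.succ_nsmul_choose_succ {R : Type*} [Ring R] [BinomialRing R] (r : R) (k : ℕ) :
    (k + 1) • Ring.choose r (k + 1) = Ring.choose r k * (r - k) := by
  simpa [Nat.choose_succ_self_right] using Ring.choose_smul_choose r (Nat.le_succ k)

theorem Ring.choose_neg_one_s6 {R : Type*} [Ring R] [BinomialRing R] (n : ℕ) :
    Ring.choose (-1 : R) n = (-1) ^ n := by
  simp [Ring.choose_neg', Ring.multichoose_one, Int.negOnePow_def, Units.smul_def]

theorem Nat.cast_centralBinom_eq_neg_four_pow_mul_choose (k : ℕ) :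
    (centralBinom k : ℚ) = (-4) ^ k * Ring.choose (-2⁻¹ : ℚ) k := by
  induction k with
  | zero => simp
  | succ k ih =>
    have hcb : ((k : ℚ) + 1) * centralBinom (k + 1) = 2 * (2 * k + 1) * centralBinom k := by
      exact_mod_cast succ_mul_centralBinom_succ k
    have hchoose : ((k : ℚ) + 1) * Ring.choose (-2⁻¹ : ℚ) (k + 1) =
        Ring.choose (-2⁻¹ : ℚ) k * (-2⁻¹ - k) := by
      simpa [nsmul_eq_mul] using Ring.succ_nsmul_choose_succ (-2⁻¹ : ℚ) k
    apply mul_left_cancel₀ (by positivity : (k : ℚ) + 1 ≠ 0)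
    rw [hcb, ih]
    linear_combination -(-4) ^ (k + 1) * hchoose

theorem Nat.sum_antidiagonal_centralBinom_mul_centralBinom (n : ℕ) :
    ∑ p ∈ antidiagonal n, centralBinom p.1 * centralBinom p.2 = 4 ^ n := by
  have key : ∑ p ∈ antidiagonal n, (centralBinom p.1 * centralBinom p.2 : ℚ) = 4 ^ n :=
    calc ∑ p ∈ antidiagonal n, (centralBinom p.1 * centralBinom p.2 : ℚ)
        = ∑ p ∈ antidiagonal n,
            (-4) ^ n * (Ring.choose (-2⁻¹ : ℚ) p.1 * Ring.choose (-2⁻¹ : ℚ) p.2) := by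
          refine sum_congr rfl fun p hp => ?_
          rw [← mem_antidiagonal.mp hp, cast_centralBinom_eq_neg_four_pow_mul_choose,
            cast_centralBinom_eq_neg_four_pow_mul_choose]
          ring
      _ = (-4) ^ n * Ring.choose (-1 : ℚ) n := by
          rw [← mul_sum, ← Ring.add_choose_eq n (Commute.refl _)]
          norm_num
      _ = 4 ^ n := by rw [Ring.choose_neg_one_s6, ← mul_pow]; norm_num
  exact_mod_cast key

namespace PowerSeries

theorem coeff_pow_eq_sum_antidiagonalTuple {R : Type*} [CommSemiring R] (φ : R⟦X⟧) (t n : ℕ) :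
    coeff n (φ ^ t) = ∑ f ∈ Nat.antidiagonalTuple t n, ∏ m : Fin t, coeff (f m) φ := by
  rw [← Fin.prod_const, coeff_prod, finsuppAntidiag, sum_map,
    ← piAntidiag_univ_fin_eq_antidiagonalTuple]
  exact sum_attach _ (fun f : Fin t → ℕ => ∏ m, coeff (f m) φ)

noncomputable def centralBinomSeries : ℕ⟦X⟧ := mk Nat.centralBinom

theorem coeff_centralBinomSeries_sq (n : ℕ) : coeff n (centralBinomSeries ^ 2) = 4 ^ n := by
  rw [sq, coeff_mul]
  simpa [centralBinomSeries] using Nat.sum_antidiagonal_centralBinom_mul_centralBinom n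

theorem centralBinomSeries_sq : centralBinomSeries ^ 2 = 1 + 4 • (X * centralBinomSeries ^ 2) := by
  ext (_ | n)
  · simp [coeff_centralBinomSeries_sq]
  · rw [map_add, map_nsmul, smul_eq_mul, coeff_succ_X_mul, coeff_centralBinomSeries_sq,
      coeff_centralBinomSeries_sq, coeff_one, if_neg n.succ_ne_zero, zero_add, pow_succ']

end PowerSeries

theorem S_eq_coeff_centralBinomSeries_pow (t n : ℕ) : S t n = coeff n (centralBinomSeries ^ t) := by
  simp [S, coeff_pow_eq_sum_antidiagonalTuple, centralBinomSeries]

theorem S_recurrence_general (t : ℕ) (n : ℕ) :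
    S (t + 2) (n + 1) = S t (n + 1) + 4 * S (t + 2) n := by
  have h : centralBinomSeries ^ (t + 2) =
      centralBinomSeries ^ t + 4 • (X * centralBinomSeries ^ (t + 2)) := by
    rw [pow_add]
    nth_rw 1 [centralBinomSeries_sq]
    rw [mul_add, mul_one, mul_smul_comm, mul_left_comm, ← pow_add]
  simpa only [S_eq_coeff_centralBinomSeries_pow, map_add, map_nsmul, smul_eq_mul,
    coeff_succ_X_mul] using congrArg (coeff (n + 1)) h

theorem S_recurrence (t : ℕ) (ht : 0 < t) (n : ℕ) :
    S (t + 2) (n + 1) = S t (n + 1) + 4 * S (t + 2) n :=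
  S_recurrence_general t n
end

section
/- For every nonnegative integer n and positive integer ℓ, the sum over all (2ℓ+1)-tuples of nonnegative integers summing to n of the product of central binomial coefficients equals binomial(2n+2ℓ, n+ℓ) * binomial(n+ℓ, n) / binomial(2ℓ, ℓ). -/
open Finset Finset.Nat

/-! Writing `c n = centralBinom n`, both sides of the identity, as functions of `n`, satisfy the
recurrence `(n + 1) a (n + 1) = 2 (2n + k) a n` with `k = 2ℓ + 1`. For the right-hand side this
follows from the elementary recurrences of binomial coefficients. For the left-hand side, the sum
is the `n`-th coefficient of `(∑ c n Xⁿ)^(2ℓ+1) = (1 - 4X)^(-(2ℓ+1)/2)`, and the Cauchy product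
of solutions for `k` and `l` is a solution for `k + l`. A solution is determined by its value at
`0`, where both sides agree once the denominator `choose (2ℓ) ℓ` is cleared. -/

theorem Finset.Nat.sum_antidiagonalTuple_succ {M : Type*} [AddCommMonoid M] (k n : ℕ)
    (g : (Fin (k + 1) → ℕ) → M) :
    ∑ f ∈ antidiagonalTuple (k + 1) n, g f =
      ∑ p ∈ antidiagonal n, ∑ x ∈ antidiagonalTuple k p.2, g (Fin.cons p.1 x) := by
  change ((List.Nat.antidiagonalTuple (k + 1) n).map g).sum =
    ((List.Nat.antidiagonal n).map fun p => ((List.Nat.antidiagonalTuple k p.2).map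
      fun x => g (Fin.cons p.1 x)).sum).sum
  simp [List.Nat.antidiagonalTuple, List.flatMap_def, List.sum_flatten, List.map_flatten,
    Function.comp_def]

/-- The recurrence of the coefficients of `(1 - 4X)^(-k/2)`, the `k`-th power of
`∑ n, centralBinom n * X^n`. -/
def CentralBinomRec {R : Type*} [Semiring R] (k : R) (a : ℕ → R) : Prop :=
  ∀ n : ℕ, (n + 1) * a (n + 1) = 2 * (2 * n + k) * a n

namespace CentralBinomRec

variable {R : Type*}

theorem eq_of_apply_zero_eq [Semiring R] [IsLeftCancelMulZero R] [CharZero R] {k : R}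
    {a b : ℕ → R} (ha : CentralBinomRec k a) (hb : CentralBinomRec k b) (h0 : a 0 = b 0) :
    a = b := by
  funext n
  induction n with
  | zero => exact h0
  | succ n ih => exact mul_left_cancel₀ (Nat.cast_add_one_ne_zero n) (by rw [ha, hb, ih])

variable [CommSemiring R] {k l : R} {a b : ℕ → R}

theorem const_mul (ha : CentralBinomRec k a) (c : R) : CentralBinomRec k (fun n => c * a n) :=
  fun n => by rw [mul_left_comm, ha n, mul_left_comm]

theorem antidiagonal_sum_mul (ha : CentralBinomRec k a) (hb : CentralBinomRec l b) :
    CentralBinomRec (k + l) (fun n => ∑ p ∈ antidiagonal n, a p.1 * b p.2) := by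
  intro n
  -- write `n + 1 = p.1 + p.2` and feed each summand to the recurrence of its own factor
  have split : ((n : R) + 1) * ∑ p ∈ antidiagonal (n + 1), a p.1 * b p.2
      = ∑ p ∈ antidiagonal (n + 1), p.1 * (a p.1 * b p.2)
        + ∑ p ∈ antidiagonal (n + 1), p.2 * (a p.1 * b p.2) := by
    rw [mul_sum, ← sum_add_distrib]
    refine sum_congr rfl fun p hp => ?_
    rw [← add_mul, ← Nat.cast_add, mem_antidiagonal.mp hp, Nat.cast_succ]
  rw [split, sum_antidiagonal_succ, sum_antidiagonal_succ']
  simp only [Nat.cast_zero, zero_mul, zero_add, Nat.cast_succ]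
  rw [mul_sum, ← sum_add_distrib]
  refine sum_congr rfl fun p hp => ?_
  have hp : (p.1 : R) + p.2 = n := by rw [← Nat.cast_add, mem_antidiagonal.mp hp]
  calc ((p.1 : R) + 1) * (a (p.1 + 1) * b p.2) + (p.2 + 1) * (a p.1 * b (p.2 + 1))
      = (p.1 + 1) * a (p.1 + 1) * b p.2 + a p.1 * ((p.2 + 1) * b (p.2 + 1)) := by ring
    _ = 2 * (2 * (p.1 + p.2) + (k + l)) * (a p.1 * b p.2) := by rw [ha, hb]; ring
    _ = 2 * (2 * n + (k + l)) * (a p.1 * b p.2) := by rw [hp]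

end CentralBinomRec

theorem centralBinomRec_centralBinom : CentralBinomRec 1 Nat.centralBinom :=
  Nat.succ_mul_centralBinom_succ

theorem centralBinomRec_sum_prod_centralBinom (k : ℕ) :
    CentralBinomRec k
      (fun n => ∑ f ∈ antidiagonalTuple k n, ∏ i, Nat.centralBinom (f i)) := by
  induction k with
  | zero =>
    rintro (_ | n) <;> simp
  | succ k ih =>
    simp only [sum_antidiagonalTuple_succ, Fin.prod_univ_succ, Fin.cons_zero, Fin.cons_succ,
      ← mul_sum]
    rw [add_comm k]
    exact centralBinomRec_centralBinom.antidiagonal_sum_mul ih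

theorem centralBinomRec_choose_mul_choose (ℓ : ℕ) :
    CentralBinomRec (2 * ℓ + 1)
      (fun n => (2 * n + 2 * ℓ).choose (n + ℓ) * (n + ℓ).choose n) := by
  intro n
  obtain ⟨m, hm⟩ : ∃ m, m = n + ℓ := ⟨_, rfl⟩
  have e1 : 2 * (n + 1) + 2 * ℓ = 2 * (m + 1) := by omega
  have e2 : 2 * n + 2 * ℓ = 2 * m := by omega
  simp only [e1, e2, add_right_comm n 1 ℓ, ← hm, ← Nat.centralBinom_eq_two_mul_choose]
  calc (n + 1) * ((m + 1).centralBinom * (m + 1).choose (n + 1))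
      = (m + 1).centralBinom * ((m + 1).choose (n + 1) * (n + 1)) := by ring
    _ = (m + 1) * (m + 1).centralBinom * m.choose n := by
        rw [← Nat.add_one_mul_choose_eq]; ring
    _ = 2 * (2 * n + (2 * ℓ + 1)) * (m.centralBinom * m.choose n) := by
        rw [Nat.succ_mul_centralBinom_succ, hm]; ring

theorem S_odd_formula_general (n ℓ : ℕ) :
    ((∑ f ∈ Finset.Nat.antidiagonalTuple (2 * ℓ + 1) n,
        ∏ m : Fin (2 * ℓ + 1), Nat.centralBinom (f m) : ℕ) : ℝ)
      = (Nat.choose (2 * n + 2 * ℓ) (n + ℓ) : ℝ) * (Nat.choose (n + ℓ) n : ℝ)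
          / (Nat.choose (2 * ℓ) ℓ : ℝ) := by
  have key := CentralBinomRec.eq_of_apply_zero_eq
    ((centralBinomRec_sum_prod_centralBinom (2 * ℓ + 1)).const_mul ((2 * ℓ).choose ℓ))
    (centralBinomRec_choose_mul_choose ℓ) (by simp [antidiagonalTuple_zero_right])
  have hchoose : ((2 * ℓ).choose ℓ : ℝ) ≠ 0 := by
    exact_mod_cast (Nat.choose_pos (by omega : ℓ ≤ 2 * ℓ)).ne'
  rw [eq_div_iff hchoose, mul_comm]
  exact_mod_cast congrFun key n

theorem S_odd_formula (n ℓ : ℕ) (hℓ : 0 < ℓ) :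
    ((∑ f ∈ Finset.Nat.antidiagonalTuple (2 * ℓ + 1) n,
        ∏ m : Fin (2 * ℓ + 1), Nat.centralBinom (f m) : ℕ) : ℝ)
      = (Nat.choose (2 * n + 2 * ℓ) (n + ℓ) : ℝ) * (Nat.choose (n + ℓ) n : ℝ)
          / (Nat.choose (2 * ℓ) ℓ : ℝ) :=
  S_odd_formula_general n ℓ
end

section
/- For all nonnegative integers p and integers ℓ with ℓ ≥ 2p, the alternating sum over i+m=p of (-1)^i * binomial(ℓ-i,i) * binomial(ℓ-2i,m) equals 1. -/
/-!
Trinomial revision, `C(ℓ-i, i) C(ℓ-2i, p-i) = C(p, i) C(ℓ-i, p)`, turns the sum into the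
`p`-th forward difference of `x ↦ C(x, p)` at `ℓ - p`, and that difference is `C(ℓ - p, 0) = 1`
because `Δ C(x, k+1) = C(x, k)` (Pascal).
-/

open Finset

theorem Int.alternating_sum_range_choose_mul_choose_sub {p n : ℕ} (hpn : p ≤ n) :
    ∑ i ∈ Finset.range (p + 1), (-1 : ℤ) ^ i * p.choose i * (n - i).choose p = 1 := by
  have newton := fwdDiff_iter_eq_sum_shift 1 (fun x ↦ x.choose (p + 0) : ℕ → ℤ) p (n - p)
  rw [fwdDiff_iter_choose, ← sum_range_reflect] at newton
  simp only [Nat.choose_zero_right, Nat.cast_one, add_zero, smul_eq_mul, mul_one] at newton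
  refine (sum_congr rfl fun i hi ↦ ?_).trans newton.symm
  have hip : i ≤ p := Nat.lt_succ_iff.mp (mem_range.mp hi)
  rw [Nat.add_sub_cancel, Nat.sub_sub_self hip, Nat.choose_symm hip,
    show n - p + (p - i) = n - i by omega]

theorem alt_sum_binom_eq_one (p ℓ : ℕ) (h : 2 * p ≤ ℓ) :
    ∑ i ∈ Finset.range (p + 1),
      (-1 : ℤ) ^ i * (Nat.choose (ℓ - i) i : ℤ) * (Nat.choose (ℓ - 2 * i) (p - i) : ℤ)
      = 1 := by
  refine (sum_congr rfl fun i hi ↦ ?_).trans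
    (Int.alternating_sum_range_choose_mul_choose_sub (show p ≤ ℓ by omega))
  have trinomial := Nat.choose_mul (n := ℓ - i) (Nat.lt_succ_iff.mp (mem_range.mp hi))
  rw [Nat.sub_sub, ← two_mul] at trinomial
  rw [mul_assoc, mul_assoc, ← Nat.cast_mul, ← Nat.cast_mul, ← trinomial, mul_comm (p.choose i)]
end

section
/- Let g(x) = (1-4x)^(-1/2) and C(x) = 2/(1+sqrt(1-4x)). For every real ℓ and nonnegative integer n, the n-th derivative of g*C^ℓ divided by n! equals the sum over i from 0 to n of binomial(2n-i, n-i)*binomial(ℓ+i-1, i)*g^(1+2n-i)*C^(ℓ+i). -/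
open Finset

theorem rchoose_zero (x : ℝ) : rchoose x 0 = 1 := by simp [rchoose]

theorem succ_mul_rchoose_succ (x : ℝ) (k : ℕ) :
    (k + 1 : ℝ) * rchoose x (k + 1) = x * rchoose (x - 1) k := by
  have hprod : ∏ j ∈ range k, (x - (j + 1 : ℕ)) = ∏ j ∈ range k, (x - 1 - j) :=
    prod_congr rfl fun j _ => by push_cast; ring
  rw [rchoose, rchoose, prod_range_succ', hprod, Nat.factorial_succ]
  push_cast
  field_simp
  ring

theorem add_add_one_mul_choose_eq (m k : ℕ) :
    (m + k + 1) * (m + 2 * k + 2).choose (k + 1)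
      = 2 * (m + 2 * k + 1) * (m + 2 * k).choose k + m * (m + 2 * k + 1).choose (k + 1) := by
  have h1 := Nat.add_one_mul_choose_eq (m + 2 * k) k
  have h2 := Nat.add_one_mul_choose_eq (m + 2 * k + 1) k
  have h3 := Nat.choose_mul_succ_eq (m + 2 * k) k
  rw [show m + 2 * k + 1 - k = m + k + 1 by omega] at h3
  refine Nat.eq_of_mul_eq_mul_left (show 0 < (k + 1) * (m + k + 1) by positivity) ?_
  zify at h1 h2 h3 ⊢
  linear_combination
    (m + k + 1) * m * h1 - (m + k + 1) ^ 2 * h2 - (m + k + 1) * (m + 2 * k + 2) * h3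

noncomputable def iteratedDerivCoeff (ℓ : ℝ) (n i : ℕ) : ℝ :=
  ((2 * n - i).choose (n - i) : ℝ) * rchoose (ℓ + i - 1) i

theorem iteratedDerivCoeff_succ_zero (ℓ : ℝ) (n : ℕ) :
    (n + 1) * iteratedDerivCoeff ℓ (n + 1) 0 = 2 * (1 + 2 * n) * iteratedDerivCoeff ℓ n 0 := by
  have h := congrArg (Nat.cast : ℕ → ℝ) (add_add_one_mul_choose_eq 0 n)
  simp only [zero_add, zero_mul, add_zero] at h
  simp only [iteratedDerivCoeff, Nat.sub_zero, rchoose_zero, mul_one,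
    show 2 * (n + 1) = 2 * n + 2 by omega]
  push_cast at h ⊢
  linear_combination h

theorem iteratedDerivCoeff_succ_self (ℓ : ℝ) (n : ℕ) :
    (n + 1) * iteratedDerivCoeff ℓ (n + 1) (n + 1) = (ℓ + n) * iteratedDerivCoeff ℓ n n := by
  have h := succ_mul_rchoose_succ (ℓ + n) n
  simp only [iteratedDerivCoeff, Nat.sub_self, Nat.choose_zero_right, Nat.cast_one, one_mul]
  push_cast at h ⊢
  rw [show ℓ + (n + 1) - 1 = ℓ + n by ring]
  exact h

theorem iteratedDerivCoeff_succ_succ (ℓ : ℝ) {n i : ℕ} (hi : i < n) :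
    (n + 1) * iteratedDerivCoeff ℓ (n + 1) (i + 1)
      = 2 * (2 * n - i) * iteratedDerivCoeff ℓ n (i + 1)
        + (ℓ + i) * iteratedDerivCoeff ℓ n i := by
  obtain ⟨k, rfl⟩ : ∃ k, n = i + k + 1 := ⟨n - i - 1, by omega⟩
  have hchoose := congrArg (Nat.cast : ℕ → ℝ) (add_add_one_mul_choose_eq (i + 1) k)
  have hrchoose := succ_mul_rchoose_succ (ℓ + i) i
  simp only [iteratedDerivCoeff]
  rw [show 2 * (i + k + 1 + 1) - (i + 1) = i + 1 + 2 * k + 2 by omega,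
    show i + k + 1 + 1 - (i + 1) = k + 1 by omega,
    show 2 * (i + k + 1) - (i + 1) = i + 1 + 2 * k by omega,
    show i + k + 1 - (i + 1) = k by omega,
    show 2 * (i + k + 1) - i = i + 1 + 2 * k + 1 by omega,
    show i + k + 1 - i = k + 1 by omega]
  push_cast at hchoose hrchoose ⊢
  rw [show ℓ + (i + 1) - 1 = ℓ + i by ring]
  linear_combination rchoose (ℓ + i) (i + 1) * hchoose
    + ((i + 1 + 2 * k + 1).choose (k + 1) : ℝ) * hrchoose

theorem HasDerivAt.rpow_const_of_hasDerivAt_mul_rpow {f : ℝ → ℝ} {c p x : ℝ}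
    (hf : HasDerivAt f (c * f x ^ p) x) (hfx : 0 < f x) (α : ℝ) :
    HasDerivAt (fun y => f y ^ α) (α * c * f x ^ (p + α - 1)) x := by
  refine (hf.rpow_const (p := α) (Or.inl hfx.ne')).congr_deriv ?_
  rw [show p + α - 1 = p + (α - 1) by ring, Real.rpow_add hfx]
  ring

noncomputable def centralBinomGF (x : ℝ) : ℝ := (1 - 4 * x) ^ (-(1 / 2) : ℝ)

noncomputable def catalanGF (x : ℝ) : ℝ := 2 / (1 + √(1 - 4 * x))

theorem hasDerivAt_one_sub_four_mul (x : ℝ) : HasDerivAt (fun y : ℝ => 1 - 4 * y) (-4) x := by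
  simpa using ((hasDerivAt_id x).const_mul (4 : ℝ)).const_sub 1

theorem catalanGF_pos (x : ℝ) : 0 < catalanGF x := by
  unfold catalanGF
  positivity

section

variable {x : ℝ}

theorem centralBinomGF_pos (hx : x < 1 / 4) : 0 < centralBinomGF x :=
  Real.rpow_pos_of_pos (by linarith) _

theorem centralBinomGF_eq_inv_sqrt (hx : x ≤ 1 / 4) :
    centralBinomGF x = (√(1 - 4 * x))⁻¹ := by
  rw [centralBinomGF, Real.rpow_neg (by linarith), Real.sqrt_eq_rpow]

theorem hasDerivAt_centralBinomGF (hx : x < 1 / 4) :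
    HasDerivAt centralBinomGF (2 * centralBinomGF x ^ (3 : ℝ)) x := by
  have hpos : 0 < 1 - 4 * x := by linarith
  refine ((hasDerivAt_one_sub_four_mul x).rpow_const (p := -(1 / 2))
    (Or.inl hpos.ne')).congr_deriv ?_
  rw [centralBinomGF, ← Real.rpow_mul hpos.le]
  norm_num

theorem hasDerivAt_catalanGF (hx : x < 1 / 4) :
    HasDerivAt catalanGF (centralBinomGF x * catalanGF x ^ (2 : ℝ)) x := by
  have hpos : 0 < 1 - 4 * x := by linarith
  have hsqrt : 0 < √(1 - 4 * x) := Real.sqrt_pos.2 hpos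
  have hden := ((hasDerivAt_one_sub_four_mul x).sqrt hpos.ne').const_add 1
  refine ((hasDerivAt_const x (2 : ℝ)).fun_div hden (by positivity)).congr_deriv ?_
  rw [centralBinomGF_eq_inv_sqrt hx.le, catalanGF, Real.rpow_two]
  field_simp
  ring

theorem hasDerivAt_centralBinomGF_rpow_mul_catalanGF_rpow (hx : x < 1 / 4) (a b : ℝ) :
    HasDerivAt (fun y => centralBinomGF y ^ a * catalanGF y ^ b)
      (2 * a * centralBinomGF x ^ (a + 2) * catalanGF x ^ b
        + b * centralBinomGF x ^ (a + 1) * catalanGF x ^ (b + 1)) x := by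
  have hg := (hasDerivAt_centralBinomGF hx).rpow_const_of_hasDerivAt_mul_rpow
    (centralBinomGF_pos hx) a
  have hC := (hasDerivAt_catalanGF hx).rpow_const_of_hasDerivAt_mul_rpow (catalanGF_pos x) b
  refine (hg.fun_mul hC).congr_deriv ?_
  rw [Real.rpow_add_one (centralBinomGF_pos hx).ne', show (3 : ℝ) + a - 1 = a + 2 by ring,
    show (2 : ℝ) + b - 1 = b + 1 by ring]
  ring

end

theorem sum_iteratedDerivCoeff_recurrence (ℓ : ℝ) (n : ℕ) (T : ℕ → ℝ) :
    ∑ i ∈ range (n + 1),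
        iteratedDerivCoeff ℓ n i * (2 * (1 + 2 * n - i) * T i + (ℓ + i) * T (i + 1))
      = (n + 1) * ∑ j ∈ range (n + 2), iteratedDerivCoeff ℓ (n + 1) j * T j := by
  have hinterior :
      ∑ i ∈ range n, (n + 1) * (iteratedDerivCoeff ℓ (n + 1) (i + 1) * T (i + 1))
        = ∑ i ∈ range n,
            (iteratedDerivCoeff ℓ n (i + 1) * (2 * (1 + 2 * n - (i + 1 : ℕ)) * T (i + 1))
              + iteratedDerivCoeff ℓ n i * ((ℓ + i) * T (i + 1))) := by
    refine sum_congr rfl fun i hi => ?_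
    have h := iteratedDerivCoeff_succ_succ ℓ (mem_range.1 hi)
    push_cast
    linear_combination T (i + 1) * h
  simp only [mul_add, sum_add_distrib, mul_sum]
  rw [sum_range_succ' (fun i => iteratedDerivCoeff ℓ n i * (2 * (1 + 2 * n - i) * T i)),
    sum_range_succ (fun i => iteratedDerivCoeff ℓ n i * ((ℓ + i) * T (i + 1))),
    sum_range_succ' _ (n + 1), sum_range_succ _ n, hinterior, sum_add_distrib]
  push_cast
  linear_combination -T 0 * iteratedDerivCoeff_succ_zero ℓ n
    - T (n + 1) * iteratedDerivCoeff_succ_self ℓ n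

noncomputable def iteratedDerivSum (ℓ : ℝ) (n : ℕ) (x : ℝ) : ℝ :=
  ∑ i ∈ range (n + 1),
    iteratedDerivCoeff ℓ n i * centralBinomGF x ^ ((1 : ℝ) + 2 * n - i)
      * catalanGF x ^ (ℓ + i)

theorem hasDerivAt_iteratedDerivSum (ℓ : ℝ) (n : ℕ) {x : ℝ} (hx : x < 1 / 4) :
    HasDerivAt (iteratedDerivSum ℓ n) ((n + 1) * iteratedDerivSum ℓ (n + 1) x) x := by
  set T : ℕ → ℝ := fun j =>
    centralBinomGF x ^ ((1 : ℝ) + 2 * (n + 1 : ℕ) - j) * catalanGF x ^ (ℓ + j)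
  have hterm : ∀ i ∈ range (n + 1), HasDerivAt
      (fun y => iteratedDerivCoeff ℓ n i * centralBinomGF y ^ ((1 : ℝ) + 2 * n - i)
        * catalanGF y ^ (ℓ + i))
      (iteratedDerivCoeff ℓ n i * (2 * (1 + 2 * n - i) * T i + (ℓ + i) * T (i + 1))) x := by
    intro i _
    have h := (hasDerivAt_centralBinomGF_rpow_mul_catalanGF_rpow hx
      ((1 : ℝ) + 2 * n - i) (ℓ + i)).const_mul (iteratedDerivCoeff ℓ n i)
    simp only [← mul_assoc] at h
    refine h.congr_deriv ?_
    simp only [T]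
    push_cast
    ring_nf
  have hsum := HasDerivAt.fun_sum hterm
  rw [sum_iteratedDerivCoeff_recurrence] at hsum
  unfold iteratedDerivSum
  simpa only [mul_assoc] using hsum

theorem iteratedDeriv_centralBinomGF_mul_catalanGF_rpow (ℓ : ℝ) (n : ℕ) {x : ℝ}
    (hx : x < 1 / 4) :
    iteratedDeriv n (fun y => centralBinomGF y * catalanGF y ^ ℓ) x
      = n.factorial * iteratedDerivSum ℓ n x := by
  induction n generalizing x with
  | zero => simp [iteratedDerivSum, iteratedDerivCoeff, rchoose_zero]
  | succ n ih =>
    have hnhds : iteratedDeriv n (fun y => centralBinomGF y * catalanGF y ^ ℓ)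
        =ᶠ[nhds x] fun y => n.factorial * iteratedDerivSum ℓ n y :=
      Filter.eventually_of_mem (Iio_mem_nhds hx) fun y hy => ih hy
    rw [iteratedDeriv_succ, hnhds.deriv_eq,
      ((hasDerivAt_iteratedDerivSum ℓ n hx).const_mul _).deriv, Nat.factorial_succ]
    push_cast
    ring

theorem iteratedDeriv_g_mul_C_pow (ℓ : ℝ) (n : ℕ) (x : ℝ) (hx : x < 1 / 4) :
    iteratedDeriv n
        (fun y : ℝ => (1 - 4 * y) ^ (-(1 / 2) : ℝ)
          * (2 / (1 + Real.sqrt (1 - 4 * y))) ^ ℓ) x / (Nat.factorial n : ℝ)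
      = ∑ i ∈ Finset.range (n + 1),
          (Nat.choose (2 * n - i) (n - i) : ℝ) * rchoose (ℓ + i - 1) i
            * ((1 - 4 * x) ^ (-(1 / 2) : ℝ)) ^ ((1 : ℝ) + 2 * n - i)
            * (2 / (1 + Real.sqrt (1 - 4 * x))) ^ (ℓ + i) := by
  rw [div_eq_iff (by positivity)]
  exact (iteratedDeriv_centralBinomGF_mul_catalanGF_rpow ℓ n hx).trans (mul_comm _ _)
end

section
/- Let F(n,i) = binomial(2n-i, n-i)*binomial(ℓ+i-1, i) and G(n,i) = i(i+1)*binomial(2n+1-i, n+1-i)*binomial(ℓ+i, i+1) for a fixed real ℓ. Then for all nonnegative integers n and 0 ≤ i ≤ n+1: (2n+ℓ+1)(2n+ℓ+2)*F(n,i) − (n+ℓ+1)(n+1)*F(n+1,i) = G(n,i+1) − G(n,i). -/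
lemma rchoose_succ_mul (x : ℝ) (k : ℕ) :
    rchoose x (k + 1) * (k + 1) = x * rchoose (x - 1) k := by
  unfold rchoose
  rw [Finset.prod_range_succ', Nat.factorial_succ]
  simp only [Nat.cast_add, Nat.cast_one, Nat.cast_mul, Nat.cast_zero, sub_zero]
  rw [Finset.prod_congr rfl fun (j : ℕ) _ => show x - ((j : ℝ) + 1) = x - 1 - j by ring]
  field_simp

lemma rchoose_succ_right_eq (x : ℝ) (k : ℕ) :
    rchoose x (k + 1) * (k + 1) = rchoose x k * (x - k) := by
  unfold rchoose
  rw [Finset.prod_range_succ, Nat.factorial_succ]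
  push_cast
  field_simp

lemma rchoose_add_one_mul (x : ℝ) (k : ℕ) :
    rchoose (x + 1) k * (x + 1 - k) = rchoose x k * (x + 1) := by
  have h₁ := rchoose_succ_mul (x + 1) k
  have h₂ := rchoose_succ_right_eq (x + 1) k
  rw [add_sub_cancel_right] at h₁
  rw [← h₂, h₁, mul_comm]

theorem wz_certificate_general (ℓ : ℝ) (n i : ℕ) :
    letI F : ℕ → ℕ → ℝ := fun n i =>
      rchoose (2 * (n : ℝ) - i) n * rchoose (ℓ + i - 1) i
    letI G : ℕ → ℕ → ℝ := fun n i =>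
      (i : ℝ) * (i + 1) * rchoose (2 * (n : ℝ) + 1 - i) n * rchoose (ℓ + i) (i + 1)
    (2 * n + ℓ + 1) * (2 * n + ℓ + 2) * F n i - (n + ℓ + 1) * (n + 1) * F (n + 1) i
      = G n (i + 1) - G n i := by
  dsimp only
  push_cast
  have hF := rchoose_succ_mul (2 * (n + 1) - i) n
  rw [show (2 * (n + 1) - i - 1 : ℝ) = 2 * n + 1 - i by ring] at hF
  have hg₀ := rchoose_succ_mul (ℓ + i) i
  have hg₁ := rchoose_succ_mul (ℓ + (i + 1)) (i + 1)
  rw [show ℓ + (i + 1) - 1 = ℓ + i by ring] at hg₁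
  have hab := rchoose_add_one_mul (2 * n - i) n
  rw [show (2 * n - i + 1 : ℝ) = 2 * n + 1 - i by ring] at hab
  rw [show (2 * n + 1 - (i + 1) : ℝ) = 2 * n - i by ring]
  push_cast at hg₁
  set a := rchoose (2 * n - i) n
  set b := rchoose (2 * n + 1 - i) n
  set L := rchoose (ℓ + i - 1) i
  linear_combination -(n + ℓ + 1) * L * hF - (i + 1) * a * hg₁
    + (i * b - (ℓ + i + 1) * a) * hg₀ - (2 * n + 2 * ℓ + i + 2) * L * hab

theorem wz_certificate (ℓ : ℝ) (n i : ℕ) (hi : i ≤ n + 1) :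
    letI F : ℕ → ℕ → ℝ := fun n i =>
      rchoose (2 * (n : ℝ) - i) n * rchoose (ℓ + i - 1) i
    letI G : ℕ → ℕ → ℝ := fun n i =>
      (i : ℝ) * (i + 1) * rchoose (2 * (n : ℝ) + 1 - i) n * rchoose (ℓ + i) (i + 1)
    (2 * n + ℓ + 1) * (2 * n + ℓ + 2) * F n i - (n + ℓ + 1) * (n + 1) * F (n + 1) i
      = G n (i + 1) - G n i :=
  wz_certificate_general ℓ n i
end
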